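/- arXiv:2209.10130 — 2 statements merged into one kernel-verified Lean document; each statement's English description precedes it below -/
import Mathlib

section
/- Let N ≥ 1, and let e₁,…,e_{N+1} ∈ ℝ^{n_x}, η₁,…,η_{N+1} ∈ ℝ≥0, σ ∈ {1,…,N+1}, ε ∈ (0,1]. Let V : ℝ^{n_x} → ℝ≥0 satisfy α̲(|e|) ≤ V(e) ≤ ᾱ(|e|) for class-K∞ functions α̲, ᾱ. Define U := c₁(a V(e₁) + η₁) + c₂ max{ max_k (b V(e_k) - η_k), 0 } + c₃ max{ ε η_σ - η₁, 0 }, where a, b, c₁, c₂, c₃ > 0 satisfy c₂ < ε c₃ < ε c₁. Then U ≥ c₁ a α̲(|e₁|) + (c₁ - c₃) η₁ + c₂ b α̲(|e_σ|) + (ε c₃ - c₂) η_σ, and in particular there exists a class-K∞ function α̲_U such that U ≥ α̲_U(|(e₁, η₁, e_σ, η_σ)|). -/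
open scoped NNReal

abbrev Ev (n : ℕ) := EuclideanSpace ℝ (Fin n)

/-- A class-K∞ function. -/
def IsKInf (α : ℝ≥0 → ℝ≥0) : Prop :=
  Continuous α ∧ StrictMono α ∧ α 0 = 0 ∧ Filter.Tendsto α Filter.atTop Filter.atTop

/-- min of two class-K∞ functions is class-K∞. -/
lemma IsKInf.min {f g : ℝ≥0 → ℝ≥0} (hf : IsKInf f) (hg : IsKInf g) :
    IsKInf fun r => min (f r) (g r) := by
  obtain ⟨hfc, hfm, hf0, hft⟩ := hf
  obtain ⟨hgc, hgm, hg0, hgt⟩ := hg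
  refine ⟨hfc.min hgc, fun x y h => min_lt_min (hfm h) (hgm h), by simp [hf0, hg0], ?_⟩
  rw [Filter.tendsto_atTop] at hft hgt ⊢
  intro b
  filter_upwards [hft b, hgt b] with x h1 h2
  exact le_min h1 h2

lemma IsKInf.const_mul {f : ℝ≥0 → ℝ≥0} (hf : IsKInf f) (m : ℝ≥0) (hm : 0 < m) :
    IsKInf fun r => m * f r := by
  obtain ⟨hfc, hfm, hf0, hft⟩ := hf
  refine ⟨continuous_const.mul hfc, fun x y h => ?_, by simp [hf0], ?_⟩
  · exact mul_lt_mul_of_pos_left (hfm h) hm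
  · exact Filter.Tendsto.const_mul_atTop' hm hft

lemma IsKInf.comp_half {f : ℝ≥0 → ℝ≥0} (hf : IsKInf f) :
    IsKInf fun r => f (r / 2) := by
  obtain ⟨hfc, hfm, hf0, hft⟩ := hf
  have h2 : (0:ℝ≥0) < 2 := by norm_num
  refine ⟨hfc.comp (continuous_id.div_const 2),
    fun x y h => hfm ((div_lt_div_iff_of_pos_right h2).2 h), by simp [hf0], ?_⟩
  refine hft.comp ?_
  rw [Filter.tendsto_atTop]
  intro b
  filter_upwards [Filter.eventually_ge_atTop (b * 2)] with x hx
  rw [le_div_iff₀ h2]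
  exact hx

lemma IsKInf.id : IsKInf (fun r : ℝ≥0 => r) :=
  ⟨continuous_id, fun _ _ h => h, rfl, Filter.tendsto_id⟩

/-- lower bound of the hybrid Lyapunov function U. Mode 1 of the
paper is index 0 here. -/
theorem stmt5 {nx N : ℕ} (hN : 1 ≤ N)
    (ε : ℝ) (hε : 0 < ε ∧ ε ≤ 1)
    (V : Ev nx → ℝ) (hV0 : ∀ x, 0 ≤ V x)
    (αl αu : ℝ≥0 → ℝ≥0) (hαl : IsKInf αl) (hαu : IsKInf αu)
    (hsand : ∀ x : Ev nx, (αl ‖x‖₊ : ℝ) ≤ V x ∧ V x ≤ (αu ‖x‖₊ : ℝ))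
    (a b c1 c2 c3 : ℝ) (ha : 0 < a) (hb : 0 < b)
    (hc1 : 0 < c1) (hc2 : 0 < c2) (hc3 : 0 < c3)
    (hcs : c2 < ε * c3 ∧ ε * c3 < ε * c1)
    (U : (Fin (N+1) → Ev nx) → (Fin (N+1) → ℝ) → Fin (N+1) → ℝ)
    (hU : ∀ (e : Fin (N+1) → Ev nx) (η : Fin (N+1) → ℝ) (σ : Fin (N+1)),
      U e η σ = c1 * (a * V (e 0) + η 0)
        + c2 * max (Finset.univ.sup' Finset.univ_nonempty (fun k => b * V (e k) - η k)) 0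
        + c3 * max (ε * η σ - η 0) 0) :
    (∀ (e : Fin (N+1) → Ev nx) (η : Fin (N+1) → ℝ), (∀ k, 0 ≤ η k) → ∀ σ : Fin (N+1),
      c1 * a * (αl ‖e 0‖₊ : ℝ) + (c1 - c3) * η 0
        + c2 * b * (αl ‖e σ‖₊ : ℝ) + (ε * c3 - c2) * η σ ≤ U e η σ) ∧
    ∃ αU : ℝ≥0 → ℝ≥0, IsKInf αU ∧
      ∀ (e : Fin (N+1) → Ev nx) (η : Fin (N+1) → ℝ), (∀ k, 0 ≤ η k) → ∀ σ : Fin (N+1),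
        (αU (Real.toNNReal
            (Real.sqrt (‖e 0‖ ^ 2 + (η 0) ^ 2 + ‖e σ‖ ^ 2 + (η σ) ^ 2))) : ℝ)
          ≤ U e η σ := by
  obtain ⟨hε0, hε1⟩ := hε
  obtain ⟨hc23, hc31⟩ := hcs
  have hc3c1 : c3 < c1 := lt_of_mul_lt_mul_left hc31 hε0.le
  -- Part 1
  have part1 : ∀ (e : Fin (N+1) → Ev nx) (η : Fin (N+1) → ℝ), (∀ k, 0 ≤ η k) →
      ∀ σ : Fin (N+1),
      c1 * a * (αl ‖e 0‖₊ : ℝ) + (c1 - c3) * η 0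
        + c2 * b * (αl ‖e σ‖₊ : ℝ) + (ε * c3 - c2) * η σ ≤ U e η σ := by
    intro e η hη σ
    rw [hU]
    have h1 : (αl ‖e 0‖₊ : ℝ) ≤ V (e 0) := (hsand (e 0)).1
    have h2 : (αl ‖e σ‖₊ : ℝ) ≤ V (e σ) := (hsand (e σ)).1
    have hsup : b * V (e σ) - η σ ≤
        Finset.univ.sup' Finset.univ_nonempty (fun k => b * V (e k) - η k) :=
      Finset.le_sup' (fun k => b * V (e k) - η k) (Finset.mem_univ σ)
    have hmax1 : b * V (e σ) - η σ ≤
        max (Finset.univ.sup' Finset.univ_nonempty (fun k => b * V (e k) - η k)) 0 :=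
      hsup.trans (le_max_left _ _)
    have hmax2 : ε * η σ - η 0 ≤ max (ε * η σ - η 0) 0 := le_max_left _ _
    nlinarith [mul_le_mul_of_nonneg_left h1 (mul_pos hc1 ha).le,
      mul_le_mul_of_nonneg_left h2 (mul_pos hc2 hb).le,
      mul_le_mul_of_nonneg_left hmax1 hc2.le,
      mul_le_mul_of_nonneg_left hmax2 hc3.le]
  refine ⟨part1, ?_⟩
  -- Part 2
  set m : ℝ := min (min (c1 * a) (c1 - c3)) (min (c2 * b) (ε * c3 - c2)) with hm
  have hmpos : 0 < m := by
    simp only [hm, lt_min_iff]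
    exact ⟨⟨mul_pos hc1 ha, by linarith⟩, mul_pos hc2 hb, by linarith⟩
  set m' : ℝ≥0 := m.toNNReal with hm'
  have hm'pos : 0 < m' := Real.toNNReal_pos.2 hmpos
  have hm'coe : (m' : ℝ) = m := Real.coe_toNNReal _ hmpos.le
  refine ⟨fun r => m' * min (αl (r / 2)) (r / 2), ?_, ?_⟩
  · exact ((hαl.comp_half.min IsKInf.id.comp_half)).const_mul m' hm'pos
  · intro e η hη σ
    have hB := part1 e η hη σ
    set u0 : ℝ := ‖e 0‖ with hu0
    set uσ : ℝ := ‖e σ‖ with huσ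
    have hu0n : 0 ≤ u0 := norm_nonneg _
    have huσn : 0 ≤ uσ := norm_nonneg _
    set M0 : ℝ := max (max u0 (η 0)) (max uσ (η σ)) with hM0
    have hM0n : 0 ≤ M0 := le_trans hu0n (le_max_left u0 (η 0) |>.trans (le_max_left _ _))
    set s : ℝ≥0 := Real.toNNReal
        (Real.sqrt (‖e 0‖ ^ 2 + (η 0) ^ 2 + ‖e σ‖ ^ 2 + (η σ) ^ 2)) with hs
    -- s ≤ 2 * M0'
    have hsqrt : Real.sqrt (‖e 0‖ ^ 2 + (η 0) ^ 2 + ‖e σ‖ ^ 2 + (η σ) ^ 2) ≤ 2 * M0 := by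
      have h1 : u0 ≤ M0 := (le_max_left _ _).trans (le_max_left _ _)
      have h2 : η 0 ≤ M0 := (le_max_right _ _).trans (le_max_left _ _)
      have h3 : uσ ≤ M0 := (le_max_left _ _).trans (le_max_right _ _)
      have h4 : η σ ≤ M0 := (le_max_right _ _).trans (le_max_right _ _)
      have hsum : ‖e 0‖ ^ 2 + (η 0) ^ 2 + ‖e σ‖ ^ 2 + (η σ) ^ 2 ≤ (2 * M0) ^ 2 := by
        nlinarith [hη 0, hη σ]
      calc Real.sqrt (‖e 0‖ ^ 2 + (η 0) ^ 2 + ‖e σ‖ ^ 2 + (η σ) ^ 2)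
          ≤ Real.sqrt ((2 * M0) ^ 2) := Real.sqrt_le_sqrt hsum
        _ = 2 * M0 := Real.sqrt_sq (by linarith)
    have hscoe : (s : ℝ) ≤ 2 * M0 := by
      rw [hs, Real.coe_toNNReal _ (Real.sqrt_nonneg _)]
      exact hsqrt
    set M0' : ℝ≥0 := M0.toNNReal with hM0'
    have hM0'coe : (M0' : ℝ) = M0 := Real.coe_toNNReal _ hM0n
    have hhalf : s / 2 ≤ M0' := by
      rw [div_le_iff₀ (by norm_num : (0:ℝ≥0) < 2)]
      rw [← NNReal.coe_le_coe, NNReal.coe_mul, hM0'coe]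
      push_cast
      linarith
    -- min monotone bound
    have hmin : (min (αl (s / 2)) (s / 2) : ℝ≥0) ≤ min (αl M0') M0' :=
      min_le_min (hαl.2.1.monotone hhalf) hhalf
    set t : ℝ := ((min (αl M0') M0' : ℝ≥0) : ℝ) with hT
    have ht0 : (0:ℝ) ≤ t := NNReal.coe_nonneg _
    have ht1 : t ≤ (αl M0' : ℝ) := NNReal.coe_le_coe.2 (min_le_left _ _)
    have ht2 : t ≤ M0 := (NNReal.coe_le_coe.2 (min_le_right _ _)).trans_eq hM0'coe
    have key : m * t ≤
        c1 * a * (αl ‖e 0‖₊ : ℝ) + (c1 - c3) * η 0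
          + c2 * b * (αl ‖e σ‖₊ : ℝ) + (ε * c3 - c2) * η σ := by
      have hαl0 : (0:ℝ) ≤ (αl ‖e 0‖₊ : ℝ) := (αl _).coe_nonneg
      have hαlσ : (0:ℝ) ≤ (αl ‖e σ‖₊ : ℝ) := (αl _).coe_nonneg
      have hmc1a : m ≤ c1 * a := (min_le_left _ _).trans (min_le_left _ _)
      have hmc13 : m ≤ c1 - c3 := (min_le_left _ _).trans (min_le_right _ _)
      have hmc2b : m ≤ c2 * b := (min_le_right _ _).trans (min_le_left _ _)
      have hmc32 : m ≤ ε * c3 - c2 := (min_le_right _ _).trans (min_le_right _ _)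
      have hT1 : (0:ℝ) ≤ c1 * a * (αl ‖e 0‖₊ : ℝ) :=
        mul_nonneg (mul_pos hc1 ha).le hαl0
      have hT2 : (0:ℝ) ≤ (c1 - c3) * η 0 := mul_nonneg (by linarith) (hη 0)
      have hT3 : (0:ℝ) ≤ c2 * b * (αl ‖e σ‖₊ : ℝ) :=
        mul_nonneg (mul_pos hc2 hb).le hαlσ
      have hT4 : (0:ℝ) ≤ (ε * c3 - c2) * η σ := mul_nonneg (by linarith) (hη σ)
      have hcase : M0 = u0 ∨ M0 = η 0 ∨ M0 = uσ ∨ M0 = η σ := by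
        rcases max_choice (max u0 (η 0)) (max uσ (η σ)) with h | h <;>
          rw [hM0, h]
        · rcases max_choice u0 (η 0) with h' | h' <;> rw [h'] <;> tauto
        · rcases max_choice uσ (η σ) with h' | h' <;> rw [h'] <;> tauto
      have hcoe : (0:ℝ) ≤ M0 := hM0n
      rcases hcase with h | h | h | h
      · have hM0'eq : M0' = ‖e 0‖₊ := by
          rw [hM0', h, hu0, Real.toNNReal_eq_nnnorm_of_nonneg (norm_nonneg _)]
          simp
        have ht1' : t ≤ (αl ‖e 0‖₊ : ℝ) := by rw [← hM0'eq]; exact ht1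
        have : m * t ≤ c1 * a * (αl ‖e 0‖₊ : ℝ) :=
          mul_le_mul hmc1a ht1' ht0 (mul_pos hc1 ha).le
        linarith
      · have ht2' : t ≤ η 0 := ht2.trans_eq h
        have : m * t ≤ (c1 - c3) * η 0 := mul_le_mul hmc13 ht2' ht0 (by linarith)
        linarith
      · have hM0'eq : M0' = ‖e σ‖₊ := by
          rw [hM0', h, huσ, Real.toNNReal_eq_nnnorm_of_nonneg (norm_nonneg _)]
          simp
        have ht1' : t ≤ (αl ‖e σ‖₊ : ℝ) := by rw [← hM0'eq]; exact ht1
        have : m * t ≤ c2 * b * (αl ‖e σ‖₊ : ℝ) :=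
          mul_le_mul hmc2b ht1' ht0 (mul_pos hc2 hb).le
        linarith
      · have ht2' : t ≤ η σ := ht2.trans_eq h
        have : m * t ≤ (ε * c3 - c2) * η σ := mul_le_mul hmc32 ht2' ht0 (by linarith)
        linarith
    calc ((m' * min (αl (s / 2)) (s / 2) : ℝ≥0) : ℝ)
        = (m' : ℝ) * ((min (αl (s / 2)) (s / 2) : ℝ≥0) : ℝ) := NNReal.coe_mul _ _
      _ ≤ (m' : ℝ) * t := by
          exact mul_le_mul_of_nonneg_left (NNReal.coe_le_coe.2 hmin) (NNReal.coe_nonneg _)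
      _ = m * t := by rw [hm'coe]
      _ ≤ _ := key.trans hB
end

section
/- Let η₁,…,η_{N+1} ∈ ℝ≥0, σ ∈ {1,…,N+1}, r ∈ {0,1}, ε ∈ (0,1], and let V : ℝ^{n_x} → ℝ≥0. Assume there exists k ≠ σ with η_k ≤ ε η_σ (jump set condition). Let k⋆ ∈ argmin_j η_j, and define the post-jump values: e₁⁺ = e₁, η₁⁺ = η₁, and for k ≥ 2, e_k⁺ = (1-r)e_k + r e_{k⋆}, η_k⁺ = (1-r)η_k + r η_{k⋆}, σ⁺ = k⋆. Then with U(e, η, σ) := c₁(aV(e₁) + η₁) + c₂ max{max_k(bV(e_k) - η_k), 0} + c₃ max{ε η_σ - η₁, 0} (with a,b,c₁,c₂,c₃ > 0), we have U(e⁺, η⁺, σ⁺) ≤ U(e, η, σ). -/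
/-- non-increase of the hybrid Lyapunov function at jumps, for both
reset policies r ∈ {0,1}. Mode 1 of the paper is index 0 here; kstar is an argmin
of the monitoring variables and is the post-jump value of σ. -/
theorem stmt10 {nx N : ℕ} (hN : 1 ≤ N)
    (e : Fin (N+1) → Ev nx) (η : Fin (N+1) → ℝ) (hη : ∀ k, 0 ≤ η k)
    (σ : Fin (N+1)) (ε r : ℝ) (hε : 0 < ε ∧ ε ≤ 1) (hr : r = 0 ∨ r = 1)
    (V : Ev nx → ℝ) (hV0 : ∀ x, 0 ≤ V x)
    (a b c1 c2 c3 : ℝ) (ha : 0 < a) (hb : 0 < b)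
    (hc1 : 0 < c1) (hc2 : 0 < c2) (hc3 : 0 < c3)
    (hjump : ∃ k, k ≠ σ ∧ η k ≤ ε * η σ)
    (kstar : Fin (N+1)) (hkstar : ∀ j, η kstar ≤ η j)
    (eplus : Fin (N+1) → Ev nx) (ηplus : Fin (N+1) → ℝ)
    (heplus0 : eplus 0 = e 0) (hηplus0 : ηplus 0 = η 0)
    (heplus : ∀ k, k ≠ 0 → eplus k = (1 - r) • e k + r • e kstar)
    (hηplus : ∀ k, k ≠ 0 → ηplus k = (1 - r) * η k + r * η kstar)
    (U : (Fin (N+1) → Ev nx) → (Fin (N+1) → ℝ) → Fin (N+1) → ℝ)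
    (hU : ∀ (ee : Fin (N+1) → Ev nx) (hh : Fin (N+1) → ℝ) (ss : Fin (N+1)),
      U ee hh ss = c1 * (a * V (ee 0) + hh 0)
        + c2 * max (Finset.univ.sup' Finset.univ_nonempty (fun k => b * V (ee k) - hh k)) 0
        + c3 * max (ε * hh ss - hh 0) 0) :
    U eplus ηplus kstar ≤ U e η σ := by
  rw [hU, hU]
  have hηks : ηplus kstar = η kstar := by
    rcases eq_or_ne kstar 0 with h0 | h0
    · rw [h0, hηplus0]
    · rw [hηplus kstar h0]; ring
  have hterm : ∀ k, b * V (eplus k) - ηplus k ≤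
      Finset.univ.sup' Finset.univ_nonempty (fun k => b * V (e k) - η k) := by
    intro k
    rcases eq_or_ne k 0 with h0 | h0
    · rw [h0, heplus0, hηplus0]
      exact Finset.le_sup' (fun k => b * V (e k) - η k) (Finset.mem_univ 0)
    · rcases hr with hr | hr
      · rw [heplus k h0, hηplus k h0, hr]
        simp only [sub_zero, one_smul, zero_smul, add_zero, one_mul, zero_mul]
        exact Finset.le_sup' (fun k => b * V (e k) - η k) (Finset.mem_univ k)
      · rw [heplus k h0, hηplus k h0, hr]
        simp only [sub_self, zero_smul, one_smul, zero_add, zero_mul, one_mul]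
        exact Finset.le_sup' (fun k => b * V (e k) - η k) (Finset.mem_univ kstar)
  have h1 : c1 * (a * V (eplus 0) + ηplus 0) = c1 * (a * V (e 0) + η 0) := by
    rw [heplus0, hηplus0]
  have h2 : (Finset.univ.sup' Finset.univ_nonempty (fun k => b * V (eplus k) - ηplus k)) ⊔ 0 ≤
      (Finset.univ.sup' Finset.univ_nonempty (fun k => b * V (e k) - η k)) ⊔ 0 :=
    max_le_max (Finset.sup'_le _ _ (fun k _ => hterm k)) le_rfl
  have h3 : (ε * ηplus kstar - ηplus 0) ⊔ 0 ≤ (ε * η σ - η 0) ⊔ 0 := by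
    apply max_le_max _ le_rfl
    rw [hηks, hηplus0]
    have := mul_le_mul_of_nonneg_left (hkstar σ) hε.1.le
    linarith
  have := add_le_add (mul_le_mul_of_nonneg_left h2 hc2.le)
    (mul_le_mul_of_nonneg_left h3 hc3.le)
  linarith
end
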